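/- Under the same setting (p ∈ (1,2], κ ≥ 0, roots of length √2, f ∈ C_c^∞(ℝ^d) nonnegative), for every x off the reflection hyperplanes: Γ(f)(x) ≤ (1/(p−1)) [ Σ_{α∈R₊} G_p(f)(r_α x) + G_p(f)(x) ]. -/

import Mathlib

noncomputable section

/-- Euclidean dot product on `ℝ^d`. -/
def dotd {d : ℕ} (x y : Fin d → ℝ) : ℝ := ∑ i, x i * y i

/-- Reflection in the hyperplane orthogonal to `α` (for `|α|² = 2`). -/
def reflAt {d : ℕ} (α x : Fin d → ℝ) : Fin d → ℝ := fun i => x i - dotd α x * α i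

/-- Partial derivative in the `i`-th coordinate direction. -/
def pd {d : ℕ} (f : (Fin d → ℝ) → ℝ) (i : Fin d) (x : Fin d → ℝ) : ℝ :=
  fderiv ℝ f x (Pi.single i 1)

/-- Euclidean Laplacian. -/
def lapd {d : ℕ} (f : (Fin d → ℝ) → ℝ) (x : Fin d → ℝ) : ℝ := ∑ i, pd (pd f i) i x

/-- The Dunkl Laplacian associated to the positive subsystem `R` and multiplicity `κ`. -/
def dunklLap {d : ℕ} (R : Finset (Fin d → ℝ)) (κ : (Fin d → ℝ) → ℝ)
    (f : (Fin d → ℝ) → ℝ) (x : Fin d → ℝ) : ℝ :=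
  lapd f x + 2 * ∑ α ∈ R, κ α *
    ((∑ i, α i * pd f i x) / dotd α x - (f x - f (reflAt α x)) / (dotd α x) ^ 2)

/-- The pseudo-gradient `G_p(f) = (1/p)[f^{2−p} Δ_κ(f^p) − p f Δ_κ f]` (real powers). -/
def Gp {d : ℕ} (p : ℝ) (R : Finset (Fin d → ℝ)) (κ : (Fin d → ℝ) → ℝ)
    (f : (Fin d → ℝ) → ℝ) (x : Fin d → ℝ) : ℝ :=
  (1 / p) * ((f x) ^ (2 - p) * dunklLap R κ (fun y => (f y) ^ p) x
    - p * f x * dunklLap R κ f x)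



open Real

def psi (p a b : ℝ) : ℝ := p*a*(a-b) - a^(2-p)*(a^p - b^p)


lemma tangent (p a b : ℝ) (hp : 1 ≤ p) (ha : 0 < a) (hb : 0 ≤ b) :
    a^p + p * a^(p-1) * (b - a) ≤ b^p := by
  have hs : -1 ≤ b/a - 1 := by
    have : 0 ≤ b / a := div_nonneg hb ha.le
    linarith
  have h := one_add_mul_self_le_rpow_one_add hs hp
  have h1 : 1 + (b/a - 1) = b/a := by ring
  rw [h1] at h
  have hap : (0:ℝ) < a ^ p := rpow_pos_of_pos ha p
  rw [Real.div_rpow hb ha.le p] at h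
  have h3 : a ^ p / a = a ^ (p-1) := by
    rw [Real.rpow_sub ha, Real.rpow_one]
  have h4 := mul_le_mul_of_nonneg_left h hap.le
  calc a^p + p * a^(p-1) * (b-a) = a ^ p * (1 + p * (b/a - 1)) := by
        rw [← h3]; field_simp
    _ ≤ a ^ p * (b ^ p / a ^ p) := h4
    _ = b ^ p := by field_simp

lemma psi_nonneg (p a b : ℝ) (hp1 : 1 < p) (hp2 : p ≤ 2) (ha : 0 ≤ a) (hb : 0 ≤ b) :
    0 ≤ psi p a b := by
  rcases eq_or_lt_of_le ha with h0 | hpos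
  · rcases eq_or_lt_of_le hp2 with rfl | hplt
    · simp [psi, ← h0, Real.zero_rpow (by norm_num : (2:ℝ) ≠ 0)]
      positivity
    · simp [psi, ← h0, Real.zero_rpow (by linarith : (2:ℝ)-p ≠ 0)]
  · have key := tangent p a b hp1.le hpos hb
    have h3 : 0 ≤ a^(2-p) := (rpow_pos_of_pos hpos _).le
    have key2 := mul_le_mul_of_nonneg_left key h3
    have h2 : a^(2-p) * a^(p-1) = a := by
      rw [← Real.rpow_add hpos]; norm_num
    have e : a^(2-p) * (a^p + p*a^(p-1)*(b-a)) = a^(2-p)*a^p + p*(a^(2-p)*a^(p-1))*(b-a) := by ring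
    rw [e, h2] at key2
    unfold psi
    nlinarith [key2]

lemma pair_ineq (p a b : ℝ) (hp1 : 1 < p) (hp2 : p ≤ 2) (ha : 0 ≤ a) (hb : 0 ≤ b) :
    (a - b)^2 ≤ 2/(p*(p-1)) * (psi p a b + psi p b a) := by
  have hp0 : (0:ℝ) < p*(p-1) := by nlinarith
  rw [div_mul_eq_mul_div, le_div_iff₀ hp0]
  rcases eq_or_lt_of_le hp2 with rfl | hplt
  · have e2 : ∀ c : ℝ, 0 ≤ c → c ^ ((2:ℝ)-2) = 1 := by intro c hc; norm_num
    have e3 : ∀ c : ℝ, 0 ≤ c → c ^ (2:ℝ) = c^2 := by intro c hc; rw [Real.rpow_two]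
    unfold psi
    rw [e2 a ha, e2 b hb, e3 a ha, e3 b hb]
    nlinarith [sq_nonneg (a-b)]
  · have hXa : a^(2-p) * a^p = a^2 := by
      rw [← Real.rpow_add' ha (by norm_num : (2-p) + p ≠ 0)]
      norm_num [Real.rpow_two]
    have hXb : b^(2-p) * b^p = b^2 := by
      rw [← Real.rpow_add' hb (by norm_num : (2-p) + p ≠ 0)]
      norm_num [Real.rpow_two]
    set u := a^((2-p)/2) * b^(p/2) with hu
    set v := a^(p/2) * b^((2-p)/2) with hv
    have hne1 : (2-p)/2 + (2-p)/2 ≠ 0 := by intro h; nlinarith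
    have hne2 : p/2 + p/2 ≠ 0 := by intro h; nlinarith
    have hne3 : (2-p)/2 + p/2 ≠ 0 := by intro h; nlinarith
    have hu2 : u*u = a^(2-p) * b^p := by
      rw [hu, mul_mul_mul_comm, ← Real.rpow_add' ha hne1, ← Real.rpow_add' hb hne2]
      norm_num
    have hv2 : v*v = a^p * b^(2-p) := by
      rw [hv, mul_mul_mul_comm, ← Real.rpow_add' ha hne2, ← Real.rpow_add' hb hne1]
      norm_num
    have huv : u*v = a*b := by
      have hne4 : p/2 + (2-p)/2 ≠ 0 := by intro h; nlinarith
      rw [hu, hv, mul_mul_mul_comm, ← Real.rpow_add' ha hne3, ← Real.rpow_add' hb hne4,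
        show (2-p)/2+p/2 = 1 by ring, show p/2+(2-p)/2 = 1 by ring, Real.rpow_one, Real.rpow_one]
    have amgm : 2*(a*b) ≤ a^(2-p)*b^p + a^p*b^(2-p) := by
      nlinarith [sq_nonneg (u-v), hu2, hv2, huv]
    unfold psi
    nlinarith [sq_nonneg (a-b), amgm, hXa, hXb,
      mul_nonneg (mul_nonneg (by linarith : (0:ℝ) ≤ 2-p) (by linarith : (0:ℝ) ≤ p-1)) (sq_nonneg (a-b))]


variable {d : ℕ} {f : (Fin d → ℝ) → ℝ} {p : ℝ}


lemma pd_of_fderiv {g : (Fin d → ℝ) → ℝ} {L : (Fin d → ℝ) →L[ℝ] ℝ} {z} (h : HasFDerivAt g L z) (i : Fin d) :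
    pd g i z = L (Pi.single i 1) := by rw [pd, h.fderiv]

lemma pd_contDiff (hf : ContDiff ℝ (⊤ : ℕ∞) f) (i : Fin d) : ContDiff ℝ (⊤ : ℕ∞) (pd f i) := by
  have h1 : ContDiff ℝ (⊤ : ℕ∞) (fderiv ℝ f) := hf.fderiv_right (m := (⊤ : ℕ∞)) (by simp)
  exact (ContinuousLinearMap.apply ℝ ℝ (Pi.single i 1 : Fin d → ℝ)).contDiff.comp h1

lemma pd_diff (hf : ContDiff ℝ (⊤ : ℕ∞) f) (i : Fin d) (z : Fin d → ℝ) :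
    DifferentiableAt ℝ (pd f i) z :=
  ((pd_contDiff hf i).differentiable (by simp)) z

lemma f_diff (hf : ContDiff ℝ (⊤ : ℕ∞) f) (z : Fin d → ℝ) : DifferentiableAt ℝ f z :=
  (hf.differentiable (by simp)) z

lemma pd_rpow (hf : ContDiff ℝ (⊤ : ℕ∞) f) (hp : 1 ≤ p) (i : Fin d) (z : Fin d → ℝ) :
    pd (fun y => f y ^ p) i z = p * f z ^ (p-1) * pd f i z := by
  have h := ((f_diff hf z).hasFDerivAt).rpow_const (Or.inr hp)
  rw [pd_of_fderiv h i]
  simp [pd, mul_assoc]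

lemma pd_pd_rpow (hf : ContDiff ℝ (⊤ : ℕ∞) f) (hp : 1 ≤ p)
    (i : Fin d) (z : Fin d → ℝ) (hz : f z ≠ 0 ∨ 1 ≤ p - 1) :
    pd (pd (fun y => f y ^ p) i) i z
      = p * (f z ^ (p-1) * pd (pd f i) i z + pd f i z * ((p-1) * f z ^ (p-1-1) * pd f i z)) := by
  have hfun : pd (fun y => f y ^ p) i = fun y => p * (f y ^ (p-1) * pd f i y) := by
    funext y; rw [pd_rpow hf hp i y]; ring
  rw [hfun]
  have h1 : HasFDerivAt (fun y => f y ^ (p-1))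
      (((p-1) * f z ^ (p-1-1)) • fderiv ℝ f z) z :=
    ((f_diff hf z).hasFDerivAt).rpow_const hz
  have h2 : HasFDerivAt (pd f i) (fderiv ℝ (pd f i) z) z := (pd_diff hf i z).hasFDerivAt
  have h3 := (h1.mul h2).const_mul p
  rw [pd_of_fderiv (g := fun y => p * (f y ^ (p - 1) * pd f i y)) h3 i]
  simp [pd, mul_comm, mul_assoc]
  ring

lemma lapd_rpow (hf : ContDiff ℝ (⊤ : ℕ∞) f) (hp : 1 ≤ p)
    (z : Fin d → ℝ) (hz : f z ≠ 0 ∨ 1 ≤ p - 1) :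
    lapd (fun y => f y ^ p) z
      = p * (p-1) * f z ^ (p-1-1) * (∑ i, (pd f i z)^2) + p * f z ^ (p-1) * lapd f z := by
  unfold lapd
  rw [Finset.sum_congr rfl (fun i _ => pd_pd_rpow hf hp i z hz)]
  rw [Finset.mul_sum, Finset.mul_sum]
  rw [← Finset.sum_add_distrib]
  exact Finset.sum_congr rfl (fun i _ => by ring)

lemma Gp_eq (hp1 : 1 < p) (R : Finset (Fin d → ℝ)) (κ : (Fin d → ℝ) → ℝ)
    (hf : ContDiff ℝ (⊤ : ℕ∞) f) (z : Fin d → ℝ) (hz : 0 < f z ∨ p = 2) :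
    Gp p R κ f z = (p-1) * (∑ j, (pd f j z)^2)
      + (2/p) * ∑ α ∈ R, κ α * psi p (f z) (f (reflAt α z)) / (dotd α z)^2 := by
  have hp0 : p ≠ 0 := by linarith
  have hcond : f z ≠ 0 ∨ 1 ≤ p - 1 := by
    rcases hz with hz | rfl
    · exact Or.inl hz.ne'
    · right; norm_num
  have e0 : f z ^ (2-p) * f z ^ (p-1-1) = 1 := by
    rcases hz with hz | rfl
    · rw [← Real.rpow_add hz, show (2-p) + (p-1-1) = 0 by ring, Real.rpow_zero]
    · norm_num
  have e1 : f z ^ (2-p) * f z ^ (p-1) = f z := by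
    rcases hz with hz | rfl
    · rw [← Real.rpow_add hz]; norm_num
    · norm_num
  have hgrad : ∀ α : Fin d → ℝ, (∑ i, α i * pd (fun y => f y ^ p) i z)
      = p * f z ^ (p-1) * (∑ i, α i * pd f i z) := by
    intro α
    rw [Finset.mul_sum]
    exact Finset.sum_congr rfl (fun i _ => by rw [pd_rpow hf hp1.le]; ring)
  have key : ∀ α ∈ R,
      f z ^ (2-p) * (κ α * ((p * f z ^ (p-1) * (∑ i, α i * pd f i z)) / dotd α z
          - (f z ^ p - f (reflAt α z) ^ p) / (dotd α z)^2))
        - p * f z * (κ α * ((∑ i, α i * pd f i z) / dotd α z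
          - (f z - f (reflAt α z)) / (dotd α z)^2))
      = κ α * psi p (f z) (f (reflAt α z)) / (dotd α z)^2 := by
    intro α _
    unfold psi
    linear_combination (κ α * p * (∑ i, α i * pd f i z) / dotd α z) * e1
  have hS : f z ^ (2-p) * (∑ α ∈ R, κ α * ((p * f z ^ (p-1) * (∑ i, α i * pd f i z)) / dotd α z
          - (f z ^ p - f (reflAt α z) ^ p) / (dotd α z)^2))
        - p * f z * (∑ α ∈ R, κ α * ((∑ i, α i * pd f i z) / dotd α z
          - (f z - f (reflAt α z)) / (dotd α z)^2))
      = ∑ α ∈ R, κ α * psi p (f z) (f (reflAt α z)) / (dotd α z)^2 := by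
    rw [Finset.mul_sum, Finset.mul_sum, ← Finset.sum_sub_distrib]
    exact Finset.sum_congr rfl key
  have h2 : p * ((p-1) * (∑ j, (pd f j z)^2)
      + (2/p) * ∑ α ∈ R, κ α * psi p (f z) (f (reflAt α z)) / (dotd α z)^2)
      = p * (p-1) * (∑ j, (pd f j z)^2)
        + 2 * ∑ α ∈ R, κ α * psi p (f z) (f (reflAt α z)) / (dotd α z)^2 := by
    field_simp
  unfold Gp dunklLap
  rw [lapd_rpow hf hp1.le z hcond]
  simp only [hgrad]
  rw [one_div, inv_mul_eq_iff_eq_mul₀ hp0, h2]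
  linear_combination (p * (p-1) * (∑ j, (pd f j z)^2)) * e0 + (p * lapd f z) * e1 + 2 * hS


lemma Gp_zero (hp1 : 1 < p) (hplt : p < 2) (R : Finset (Fin d → ℝ)) (κ : (Fin d → ℝ) → ℝ)
    {z : Fin d → ℝ} (hz : f z = 0) : Gp p R κ f z = 0 := by
  unfold Gp
  rw [hz, Real.zero_rpow (by linarith : 2 - p ≠ 0)]
  simp

lemma Gp_lb (hp1 : 1 < p) (hp2 : p ≤ 2) (R : Finset (Fin d → ℝ)) (κ : (Fin d → ℝ) → ℝ)
    (hf : ContDiff ℝ (⊤ : ℕ∞) f) (hf0 : ∀ y, 0 ≤ f y) (z : Fin d → ℝ) :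
    (p-1) * (∑ j, (pd f j z)^2)
      + (2/p) * ∑ α ∈ R, κ α * psi p (f z) (f (reflAt α z)) / (dotd α z)^2
      ≤ Gp p R κ f z := by
  rcases (hf0 z).eq_or_lt with h0 | hpos
  · rcases eq_or_lt_of_le hp2 with rfl | hplt
    · exact (Gp_eq hp1 R κ hf z (Or.inr rfl)).ge
    · rw [Gp_zero hp1 hplt R κ h0.symm]
      have hmin : IsLocalMin f z := Filter.Eventually.of_forall (fun y => by
        rw [← h0]; exact hf0 y)
      have hgrad : fderiv ℝ f z = 0 := hmin.fderiv_eq_zero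
      have hpd : ∀ j, pd f j z = 0 := fun j => by simp [pd, hgrad]
      have hpsi : ∀ b : ℝ, psi p (f z) b = 0 := fun b => by
        simp [psi, ← h0, Real.zero_rpow (by linarith : 2 - p ≠ 0)]
      simp [hpd, hpsi]
  · exact (Gp_eq hp1 R κ hf z (Or.inl hpos)).ge

lemma dotd_reflAt (α x : Fin d → ℝ) (h : dotd α α = 2) :
    dotd α (reflAt α x) = - dotd α x := by
  have e : dotd α (reflAt α x) = dotd α x - dotd α x * dotd α α := by
    unfold dotd reflAt
    rw [Finset.mul_sum, ← Finset.sum_sub_distrib]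
    exact Finset.sum_congr rfl (fun i _ => by unfold dotd; ring)
  rw [e, h]; ring

lemma reflAt_invol (α x : Fin d → ℝ) (h : dotd α α = 2) :
    reflAt α (reflAt α x) = x := by
  funext i
  have e : reflAt α (reflAt α x) i = reflAt α x i - dotd α (reflAt α x) * α i := rfl
  rw [e, dotd_reflAt α x h]
  unfold reflAt
  ring

theorem carreDuChamp_le_sum_Gp {d : ℕ} (p : ℝ) (hp1 : 1 < p) (hp2 : p ≤ 2)
    (R : Finset (Fin d → ℝ)) (κ : (Fin d → ℝ) → ℝ)
    (hlen : ∀ α ∈ R, dotd α α = 2) (hκ : ∀ α ∈ R, 0 ≤ κ α)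
    (f : (Fin d → ℝ) → ℝ) (hf : ContDiff ℝ (⊤ : ℕ∞) f) (hfc : HasCompactSupport f)
    (hf0 : ∀ y, 0 ≤ f y)
    (x : Fin d → ℝ) (hx : ∀ α ∈ R, dotd α x ≠ 0) :
    (∑ j, (pd f j x) ^ 2)
        + ∑ α ∈ R, κ α * (f x - f (reflAt α x)) ^ 2 / (dotd α x) ^ 2
      ≤ (1 / (p - 1)) *
          ((∑ α ∈ R, Gp p R κ f (reflAt α x)) + Gp p R κ f x) := by
  have hpm : (0:ℝ) < p - 1 := by linarith
  have hp0 : (0:ℝ) < p := by linarith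
  have lbx := Gp_lb hp1 hp2 R κ hf hf0 x
  have lbr : ∀ β ∈ R, (2/p) * (κ β * psi p (f (reflAt β x)) (f x) / (dotd β x)^2)
      ≤ Gp p R κ f (reflAt β x) := by
    intro β hβ
    refine le_trans ?_ (Gp_lb hp1 hp2 R κ hf hf0 (reflAt β x))
    have h1 : κ β * psi p (f (reflAt β x)) (f (reflAt β (reflAt β x))) / (dotd β (reflAt β x))^2
        = κ β * psi p (f (reflAt β x)) (f x) / (dotd β x)^2 := by
      rw [reflAt_invol β x (hlen β hβ), dotd_reflAt β x (hlen β hβ), neg_sq]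
    have hterm : ∀ α ∈ R,
        0 ≤ κ α * psi p (f (reflAt β x)) (f (reflAt α (reflAt β x))) / (dotd α (reflAt β x))^2 :=
      fun α hα => div_nonneg (mul_nonneg (hκ α hα)
        (psi_nonneg p _ _ hp1 hp2 (hf0 _) (hf0 _))) (sq_nonneg _)
    have hsingle := Finset.single_le_sum hterm hβ
    have h2 : (0:ℝ) ≤ 2/p := by positivity
    calc (2/p) * (κ β * psi p (f (reflAt β x)) (f x) / (dotd β x)^2)
        = (2/p) * (κ β * psi p (f (reflAt β x)) (f (reflAt β (reflAt β x)))
            / (dotd β (reflAt β x))^2) := by rw [h1]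
      _ ≤ (2/p) * ∑ α ∈ R, κ α * psi p (f (reflAt β x)) (f (reflAt α (reflAt β x)))
            / (dotd α (reflAt β x))^2 := mul_le_mul_of_nonneg_left hsingle h2
      _ ≤ (p-1) * (∑ j, (pd f j (reflAt β x))^2)
          + (2/p) * ∑ α ∈ R, κ α * psi p (f (reflAt β x)) (f (reflAt α (reflAt β x)))
            / (dotd α (reflAt β x))^2 := le_add_of_nonneg_left (by positivity)
  have step1 : ∑ β ∈ R, (2/p) * (κ β * psi p (f (reflAt β x)) (f x) / (dotd β x)^2)
      ≤ ∑ β ∈ R, Gp p R κ f (reflAt β x) := Finset.sum_le_sum lbr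
  have perterm : ∀ α ∈ R, κ α * (f x - f (reflAt α x))^2 / (dotd α x)^2
      ≤ (1/(p-1)) * ((2/p) * (κ α * psi p (f x) (f (reflAt α x)) / (dotd α x)^2)
        + (2/p) * (κ α * psi p (f (reflAt α x)) (f x) / (dotd α x)^2)) := by
    intro α hα
    have hpair := pair_ineq p (f x) (f (reflAt α x)) hp1 hp2 (hf0 _) (hf0 _)
    have hc : 0 ≤ κ α / (dotd α x)^2 := div_nonneg (hκ α hα) (sq_nonneg _)
    have h3 := mul_le_mul_of_nonneg_left hpair hc
    calc κ α * (f x - f (reflAt α x))^2 / (dotd α x)^2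
        = (κ α / (dotd α x)^2) * (f x - f (reflAt α x))^2 := by ring
      _ ≤ (κ α / (dotd α x)^2) * (2/(p*(p-1)) * (psi p (f x) (f (reflAt α x))
            + psi p (f (reflAt α x)) (f x))) := h3
      _ = (1/(p-1)) * ((2/p) * (κ α * psi p (f x) (f (reflAt α x)) / (dotd α x)^2)
          + (2/p) * (κ α * psi p (f (reflAt α x)) (f x) / (dotd α x)^2)) := by
          field_simp
  have main2 : (∑ j, (pd f j x) ^ 2)
        + ∑ α ∈ R, κ α * (f x - f (reflAt α x)) ^ 2 / (dotd α x) ^ 2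
      ≤ (1/(p-1)) * ((∑ β ∈ R, (2/p) * (κ β * psi p (f (reflAt β x)) (f x) / (dotd β x)^2))
          + ((p-1) * (∑ j, (pd f j x)^2)
            + (2/p) * ∑ α ∈ R, κ α * psi p (f x) (f (reflAt α x)) / (dotd α x)^2)) := by
    have expand : (1/(p-1)) * ((∑ β ∈ R, (2/p) * (κ β * psi p (f (reflAt β x)) (f x) / (dotd β x)^2))
          + ((p-1) * (∑ j, (pd f j x)^2)
            + (2/p) * ∑ α ∈ R, κ α * psi p (f x) (f (reflAt α x)) / (dotd α x)^2))
        = (∑ j, (pd f j x)^2)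
          + ∑ α ∈ R, (1/(p-1)) * ((2/p) * (κ α * psi p (f x) (f (reflAt α x)) / (dotd α x)^2)
            + (2/p) * (κ α * psi p (f (reflAt α x)) (f x) / (dotd α x)^2)) := by
      have split : ∑ α ∈ R, (1/(p-1)) * ((2/p) * (κ α * psi p (f x) (f (reflAt α x)) / (dotd α x)^2)
            + (2/p) * (κ α * psi p (f (reflAt α x)) (f x) / (dotd α x)^2))
          = (1/(p-1)) * ∑ α ∈ R, (2/p) * (κ α * psi p (f (reflAt α x)) (f x) / (dotd α x)^2)
            + (1/(p-1)) * ((2/p) * ∑ α ∈ R, κ α * psi p (f x) (f (reflAt α x)) / (dotd α x)^2) := by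
        rw [Finset.mul_sum, Finset.mul_sum, Finset.mul_sum, ← Finset.sum_add_distrib]
        exact Finset.sum_congr rfl fun α _ => by ring
      rw [split]
      field_simp
      ring
    rw [expand]
    exact add_le_add le_rfl (Finset.sum_le_sum perterm)
  refine main2.trans ?_
  exact mul_le_mul_of_nonneg_left (add_le_add step1 lbx) (by positivity)
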